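/- Let L be the line (path) on [n], I_L its binomial edge ideal, g = x_1 y_n − x_n y_1, and J_G̃ the binomial edge ideal of the complete graph on [n]. Then I_L : (I_L : g) = J_G̃. -/

import Mathlib

open MvPolynomial CategoryTheory Opposite

noncomputable section

namespace BEIPaper

/-- The `x_i` variable of the polynomial ring `K[x_1,…,x_n,y_1,…,y_n]`,
which we realize as `MvPolynomial (σ ⊕ σ) K`, where `Sum.inl i ↦ x_i` and
`Sum.inr i ↦ y_i`. -/
def xv (K : Type) [Field K] {σ : Type} (i : σ) : MvPolynomial (σ ⊕ σ) K :=
  X (Sum.inl i)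

/-- The `y_i` variable. -/
def yv (K : Type) [Field K] {σ : Type} (i : σ) : MvPolynomial (σ ⊕ σ) K :=
  X (Sum.inr i)

/-- The binomial edge ideal of a graph `G` on the vertex set `[n]`:
generated by the binomials `x_i y_j - x_j y_i` for edges `{i, j}` with `i < j`. -/
def bei (K : Type) [Field K] {n : ℕ} (G : SimpleGraph (Fin n)) :
    Ideal (MvPolynomial (Fin n ⊕ Fin n) K) :=
  Ideal.span {f | ∃ i j : Fin n, i < j ∧ G.Adj i j ∧
    f = xv K i * yv K j - xv K j * yv K i}

/-- The prime ideal `P_T(G)`: generated by `{x_i, y_i : i ∈ T}` together with the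
binomial edge ideals of the complete graphs on the vertex sets of the connected
components of the induced subgraph of `G` on `[n] ∖ T` (equivalently, all binomials
`x_i y_j - x_j y_i` where `i < j` lie outside `T` in the same connected component). -/
def PT (K : Type) [Field K] {n : ℕ} (G : SimpleGraph (Fin n)) (T : Set (Fin n)) :
    Ideal (MvPolynomial (Fin n ⊕ Fin n) K) :=
  Ideal.span ((xv K '' T) ∪ (yv K '' T) ∪
    {f | ∃ i j : Fin n, ∃ (hi : i ∈ Tᶜ) (hj : j ∈ Tᶜ), i < j ∧
      (G.induce Tᶜ).Reachable ⟨i, hi⟩ ⟨j, hj⟩ ∧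
      f = xv K i * yv K j - xv K j * yv K i})

/-- `c(T)`: the number of connected components of the induced subgraph of `G`
on `[n] ∖ T`. -/
def ncomp {n : ℕ} (G : SimpleGraph (Fin n)) (T : Set (Fin n)) : ℕ :=
  Nat.card (G.induce Tᶜ).ConnectedComponent

/-- The graded (irrelevant) maximal ideal of a polynomial ring, generated by
all the variables. -/
def mIdeal (K : Type) [Field K] (σ : Type) : Ideal (MvPolynomial σ K) :=
  Ideal.span (Set.range X)

/-- The depth of a module `M` with respect to an ideal `I`: the supremum of lengths
of `M`-regular sequences consisting of elements of `I`. -/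
def depth {R : Type} [CommRing R] (I : Ideal R) (M : Type) [AddCommGroup M]
    [Module R M] : ℕ∞ :=
  sSup {k : ℕ∞ | ∃ rs : List R, (rs.length : ℕ∞) = k ∧ (∀ r ∈ rs, r ∈ I) ∧
    RingTheory.Sequence.IsRegular M rs}

/-- The (Krull) dimension of a module: the Krull dimension of `R` modulo the
annihilator of `M`. -/
def mdim (R : Type) [CommRing R] (M : Type) [AddCommGroup M] [Module R M] :
    WithBot ℕ∞ :=
  ringKrullDim (R ⧸ Module.annihilator R M)

/-- `M` is a Cohen-Macaulay `R`-module of dimension `d` (depth and dimension both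
being taken with respect to the given (maximal graded) ideal `I`). -/
def IsCMmodOfDim {R : Type} [CommRing R] (I : Ideal R) (M : Type) [AddCommGroup M]
    [Module R M] (d : ℕ) : Prop :=
  (depth I M : WithBot ℕ∞) = mdim R M ∧ mdim R M = (d : ℕ∞)

/-- The quotient `S/J` of a polynomial ring `S` by an ideal `J` is a Cohen-Macaulay
ring: its depth with respect to the graded maximal ideal equals its Krull dimension. -/
def IsCMQuot (K : Type) [Field K] {σ : Type} (J : Ideal (MvPolynomial σ K)) : Prop :=
  (depth (mIdeal K σ) (MvPolynomial σ K ⧸ J) : WithBot ℕ∞) =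
    ringKrullDim (MvPolynomial σ K ⧸ J)

/-- `S/I` is approximately Cohen-Macaulay: there is a homogeneous element `x` of
positive degree in the irrelevant ideal of `R = S/I` (i.e. the image of a homogeneous
polynomial `f` of positive degree) such that `R/x^m R = S/(I + (f^m))` is a
Cohen-Macaulay ring of dimension `dim R - 1` for all `m ≥ 1`. -/
def IsACM (K : Type) [Field K] {σ : Type} (I : Ideal (MvPolynomial σ K)) : Prop :=
  ∃ (d : ℕ) (f : MvPolynomial σ K), 0 < d ∧ f.IsHomogeneous d ∧
    ∀ m : ℕ, 1 ≤ m →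
      IsCMQuot K (I ⊔ Ideal.span {f ^ m}) ∧
      ringKrullDim (MvPolynomial σ K ⧸ (I ⊔ Ideal.span {f ^ m})) + 1 =
        ringKrullDim (MvPolynomial σ K ⧸ I)

/-- The Hilbert series of `S/I` (for a homogeneous ideal `I`), as a power series
over `ℤ`: the `m`-th coefficient is the `K`-dimension of the degree-`m` graded
component of `S/I`, i.e. of the image of the space of degree-`m` homogeneous
polynomials in `S/I`. -/
def hseries (K : Type) [Field K] {σ : Type} (I : Ideal (MvPolynomial σ K)) :
    PowerSeries ℤ :=
  PowerSeries.mk fun m =>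
    (Module.finrank K (Submodule.map (Ideal.Quotient.mkₐ K I).toLinearMap
      (homogeneousSubmodule σ K m)) : ℤ)

/-- The formal power series variable `t`. -/
def t : PowerSeries ℤ := PowerSeries.X

/-- The equidimensional part `U_S(I)` of (a minimal primary decomposition of) `I`:
the intersection of the primary components `I(p)` over the associated primes `p`
with `dim S/p = dim S/I`.  Any such `p` is a minimal prime of `I`, so its primary
component is independent of the decomposition and equals the saturation
`{x | ∃ s ∉ p, s * x ∈ I}`. -/
def USideal {R : Type} [CommRing R] (I : Ideal R) : Ideal R :=
  sInf {J | ∃ p ∈ associatedPrimes R (R ⧸ I),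
    ringKrullDim (R ⧸ p) = ringKrullDim (R ⧸ I) ∧
    J = Ideal.span {x | ∃ s ∉ p, s * x ∈ I}}

/-- `Ext_S^j(S/I, S)`, as an object of `ModuleCat S`.  The `i`-th module of
deficiency of `S/I` is `ω^i(S/I) = Ext_S^{2n-i}(S/I, S)`, i.e. `extSI K I (2*n - i)`. -/
def extSI (K : Type) [Field K] {σ : Type} (I : Ideal (MvPolynomial σ K)) (j : ℕ) :
    ModuleCat (MvPolynomial σ K) :=
  ((Ext (MvPolynomial σ K) (ModuleCat (MvPolynomial σ K)) j).obj
      (op (ModuleCat.of (MvPolynomial σ K) (MvPolynomial σ K ⧸ I)))).obj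
    (ModuleCat.of (MvPolynomial σ K) (MvPolynomial σ K))

/-- The line (path) graph on `[n]` (with `[n]` realized as `Fin n`), with edges
`{i, i+1}` for `1 ≤ i ≤ n-1`. -/
def lineG (n : ℕ) : SimpleGraph (Fin n) :=
  SimpleGraph.fromRel (fun a b => (b : ℕ) = (a : ℕ) + 1)

/-- The cycle of length `n` on `[n]` (with `[n]` realized as `Fin n`), with edges
`{i, i+1}` for `1 ≤ i ≤ n-1` together with `{1, n}`. -/
def cycleG (n : ℕ) : SimpleGraph (Fin n) :=
  SimpleGraph.fromRel (fun a b =>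
    (b : ℕ) = (a : ℕ) + 1 ∨ ((a : ℕ) = 0 ∧ (b : ℕ) = n - 1))

/-- The binomial `g = x_1 y_n - x_n y_1`. -/
def gElt (K : Type) [Field K] {n : ℕ} (hn : 0 < n) : MvPolynomial (Fin n ⊕ Fin n) K :=
  xv K ⟨0, hn⟩ * yv K ⟨n - 1, by omega⟩ - xv K ⟨n - 1, by omega⟩ * yv K ⟨0, hn⟩

/-- The `i`-th generator `x_2 x_3 ⋯ x_i y_{i+1} ⋯ y_{n-1}` (for `i = 1, …, n-1`)
of the monomial ideal `M`; the product ranges over the labels `p = 2, …, n-1`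
(`0`-indexed: `q = p - 1` with `1 ≤ q ≤ n-2`), taking `x_p` when `p ≤ i` and
`y_p` when `p > i`. -/
def mgen (K : Type) [Field K] (n : ℕ) (i : ℕ) : MvPolynomial (Fin n ⊕ Fin n) K :=
  ∏ q ∈ Finset.univ.filter (fun q : Fin n => 0 < (q : ℕ) ∧ (q : ℕ) < n - 1),
    (if (q : ℕ) + 1 ≤ i then xv K q else yv K q)

/-- The monomial ideal
`M = (x_2 x_3 ⋯ x_{n-1}, x_2 x_3 ⋯ x_{n-2} y_{n-1}, …, x_2 y_3 ⋯ y_{n-1}, y_2 y_3 ⋯ y_{n-1})`. -/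
def monoM (K : Type) [Field K] (n : ℕ) : Ideal (MvPolynomial (Fin n ⊕ Fin n) K) :=
  Ideal.span {f | ∃ i : ℕ, 1 ≤ i ∧ i ≤ n - 1 ∧ f = mgen K n i}

/-- The degree of a vertex, as the cardinality of its neighbor set. -/
def deg {n : ℕ} (G : SimpleGraph (Fin n)) (v : Fin n) : ℕ :=
  Nat.card (G.neighborSet v)

/-- A tree is 3-star like if no vertex has degree `≥ 4`, and either there is at most
one vertex of degree `3`, or there are exactly two vertices of degree `3` and they
are joined by an edge. -/
def ThreeStarLike {n : ℕ} (G : SimpleGraph (Fin n)) : Prop :=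
  (∀ v, deg G v ≤ 3) ∧
    ({v | deg G v = 3}.Subsingleton ∨
      ∃ a b : Fin n, a ≠ b ∧ G.Adj a b ∧ {v | deg G v = 3} = {a, b})

/-- The graph `G′` on `[n+1]` obtained from a graph `G` on `[n]` by attaching the
new edge `{v, n+1}` at the vertex `v` of `G`. -/
def extendG {n : ℕ} (G : SimpleGraph (Fin n)) (v : Fin n) : SimpleGraph (Fin (n + 1)) :=
  SimpleGraph.fromRel (fun a b =>
    (∃ (ha : a ≠ Fin.last n) (hb : b ≠ Fin.last n),
      G.Adj (a.castPred ha) (b.castPred hb)) ∨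
    (a = Fin.castSucc v ∧ b = Fin.last n))

/-- The inclusion `S = K[x_1,…,x_n,y_1,…,y_n] → S′ = K[x_1,…,x_{n+1},y_1,…,y_{n+1}]`. -/
def liftS (K : Type) [Field K] (n : ℕ) :
    MvPolynomial (Fin n ⊕ Fin n) K →ₐ[K] MvPolynomial (Fin (n + 1) ⊕ Fin (n + 1)) K :=
  rename (Sum.map Fin.castSucc Fin.castSucc)

/-!
For a set `T` of vertices let `φ_T` kill `x_i, y_i` for `i ∈ T` and send them otherwise to
`c_i s_k, c_i t_k`, where `k` is the number of elements of `T` below `i`. Modulo a binomial edge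
ideal every polynomial reduces to a combination of standard monomials (divisible by no `x_i y_j`
with `i < j` an edge), and a standard monomial can be read off from its image under `φ_T` for a
`T` chosen from the monomial. Hence `J_G̃ = ker φ_∅`, and `I_L = ⋂ ker φ_T` over the sets `T` of
interior vertices.

For `T ≠ ∅` the monomial `u = x_2 ⋯ x_{n-1}` lies in `ker φ_T` and `g` does not, while `g` lies in
`ker φ_∅` and `u` does not. So `u ∈ I_L : g`, and primality of `ker φ_∅` gives `⊆`; if `φ_∅(r) = 0`
and `p g ∈ I_L`, then `φ_T(r p) = 0` for every `T`, which gives `⊇`.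
-/

open Finset

variable {K : Type} [Field K] {n : ℕ}

section Standard

def IsStandardMonomial (G : SimpleGraph (Fin n)) (e : Fin n ⊕ Fin n →₀ ℕ) : Prop :=
  ∀ i j, i < j → G.Adj i j → e (Sum.inl i) = 0 ∨ e (Sum.inr j) = 0

lemma binomial_mem_bei {G : SimpleGraph (Fin n)} {i j : Fin n} (hij : i < j) (hadj : G.Adj i j) :
    xv K i * yv K j - xv K j * yv K i ∈ bei K G :=
  Ideal.subset_span ⟨i, j, hij, hadj, rfl⟩

lemma bei_le {G : SimpleGraph (Fin n)} {I : Ideal (MvPolynomial (Fin n ⊕ Fin n) K)}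
    (h : ∀ i j, i < j → G.Adj i j → xv K i * yv K j - xv K j * yv K i ∈ I) : bei K G ≤ I :=
  Ideal.span_le.mpr fun _ ⟨i, j, hij, hadj, hf⟩ => hf ▸ h i j hij hadj

lemma monomial_sub_monomial_swap (i j : Fin n) (e : Fin n ⊕ Fin n →₀ ℕ) (c : K) :
    monomial (Finsupp.single (Sum.inl i) 1 + Finsupp.single (Sum.inr j) 1 + e) c -
        monomial (Finsupp.single (Sum.inl j) 1 + Finsupp.single (Sum.inr i) 1 + e) c =
      (xv K i * yv K j - xv K j * yv K i) * monomial e c := by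
  simp only [xv, yv, X, monomial_mul, one_mul, sub_mul, add_comm]

lemma exists_standard_sub_monomial_mem (G : SimpleGraph (Fin n)) (e : Fin n ⊕ Fin n →₀ ℕ) (c : K) :
    ∃ r ∈ restrictSupport K {e | IsStandardMonomial G e}, monomial e c - r ∈ bei K G := by
  -- the rewriting `x_i y_j ↦ x_j y_i` (`i < j`) lowers this weight
  induction h : Finsupp.weight (Sum.elim (fun i : Fin n => n - i) 0) e
    using Nat.strong_induction_on generalizing e with
  | _ w ih =>
  by_cases hs : IsStandardMonomial G e
  · exact ⟨monomial e c, by simpa using Or.inl hs, by simp⟩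
  simp only [IsStandardMonomial, not_forall, not_or] at hs
  obtain ⟨i, j, hij, hadj, hi, hj⟩ := hs
  obtain ⟨e, rfl⟩ := le_iff_exists_add.mp
    (show Finsupp.single (Sum.inl i) 1 + Finsupp.single (Sum.inr j) 1 ≤ e from fun v => by
      rcases v with v | v <;> simp only [Finsupp.add_apply, Finsupp.single_apply] <;>
        split_ifs with h <;> simp_all <;> omega)
  have hlt : Finsupp.weight (Sum.elim (fun i : Fin n => n - i) 0)
      (Finsupp.single (Sum.inl j) 1 + Finsupp.single (Sum.inr i) 1 + e) < w := by
    subst h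
    simp only [map_add, Finsupp.weight_single, Sum.elim_inl, Sum.elim_inr, Pi.zero_apply,
      one_smul]
    have := Fin.lt_def.mp hij
    omega
  obtain ⟨r, hr, hsub⟩ := ih _ hlt _ rfl
  refine ⟨r, hr, ?_⟩
  have := add_mem (Ideal.mul_mem_right (monomial e c) _ (binomial_mem_bei hij hadj)) hsub
  rwa [← monomial_sub_monomial_swap, sub_add_sub_cancel] at this

lemma exists_standard_sub_mem_bei (G : SimpleGraph (Fin n)) (p : MvPolynomial (Fin n ⊕ Fin n) K) :
    ∃ r ∈ restrictSupport K {e | IsStandardMonomial G e}, p - r ∈ bei K G := by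
  induction p using MvPolynomial.induction_on' with
  | monomial e c => exact exists_standard_sub_monomial_mem G e c
  | add p q hp hq =>
    obtain ⟨r, hr, hpr⟩ := hp
    obtain ⟨s, hs, hqs⟩ := hq
    exact ⟨r + s, add_mem hr hs, by simpa [add_sub_add_comm] using add_mem hpr hqs⟩

lemma mem_bei_iff_forall_eq_zero {G : SimpleGraph (Fin n)} {ι A : Type*} [CommRing A]
    [Algebra K A] (φ : ι → MvPolynomial (Fin n ⊕ Fin n) K →ₐ[K] A)
    (hle : ∀ k, bei K G ≤ RingHom.ker (φ k))
    (hinj : ∀ r ∈ restrictSupport K {e | IsStandardMonomial G e}, (∀ k, φ k r = 0) → r = 0)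
    (p : MvPolynomial (Fin n ⊕ Fin n) K) : p ∈ bei K G ↔ ∀ k, φ k p = 0 := by
  refine ⟨fun hp k => hle k hp, fun hp => ?_⟩
  obtain ⟨r, hr, hpr⟩ := exists_standard_sub_mem_bei G p
  have hr0 : r = 0 := hinj r hr fun k => by
    simpa [hp k] using RingHom.mem_ker.mp (hle k hpr)
  simpa [hr0] using hpr

end Standard

section CutHom

def cutIndex (T : Finset (Fin n)) (i : Fin n) : ℕ := #(T.filter (· < i))

lemma cutIndex_lt_of_mem {T : Finset (Fin n)} {i j k : Fin n} (hk : k ∈ T) (hik : i ≤ k)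
    (hkj : k < j) : cutIndex T i < cutIndex T j :=
  card_lt_card <| (ssubset_iff_of_subset (monotone_filter_right _ fun _ _ (h : _ < i) =>
    h.trans_le (hik.trans hkj.le))).mpr ⟨k, by simp [hk, hkj], by simp [hik]⟩

lemma cutIndex_eq_of_notMem {T : Finset (Fin n)} {i j : Fin n} (hi : i ∉ T)
    (hij : j.val = i.val + 1) : cutIndex T j = cutIndex T i := by
  refine congrArg card (filter_congr fun t ht => ?_)
  have : t.val ≠ i.val := fun h => hi (Fin.ext h ▸ ht)
  rw [Fin.lt_def, Fin.lt_def, hij]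
  omega

def vertex : Fin n ⊕ Fin n → Fin n := Sum.elim id id

/-- `c_i`, then `s_k` and `t_k`, the variables of the target of `cutHom`. -/
abbrev CutVar (n : ℕ) := Fin n ⊕ (ℕ ⊕ ℕ)

/-- The exponent of `φ_T(x_i) = c_i s_k` and `φ_T(y_i) = c_i t_k`, with `k = cutIndex T i`. -/
def vertexExp (T : Finset (Fin n)) (v : Fin n ⊕ Fin n) : CutVar n →₀ ℕ :=
  Finsupp.single (Sum.inl (vertex v)) 1 +
    Finsupp.single (Sum.inr (v.map (cutIndex T) (cutIndex T))) 1

/-- `φ_T`; its kernel is the prime `P_T(L)`. -/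
def cutHom (K : Type) [Field K] (T : Finset (Fin n)) :
    MvPolynomial (Fin n ⊕ Fin n) K →ₐ[K] MvPolynomial (CutVar n) K :=
  aeval fun v => if vertex v ∈ T then 0 else monomial (vertexExp T v) 1

def VanishesOn (T : Finset (Fin n)) (e : Fin n ⊕ Fin n →₀ ℕ) : Prop :=
  ∀ v, vertex v ∈ T → e v = 0

lemma cutHom_X (T : Finset (Fin n)) (v : Fin n ⊕ Fin n) :
    cutHom K T (X v) = if vertex v ∈ T then 0 else monomial (vertexExp T v) 1 :=
  aeval_X _ _

lemma cutHom_monomial {T : Finset (Fin n)} {e : Fin n ⊕ Fin n →₀ ℕ} (h : VanishesOn T e)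
    (c : K) : cutHom K T (monomial e c) = monomial (Finsupp.weight (vertexExp T) e) c := by
  rw [cutHom, aeval_monomial, Finsupp.weight_apply, monomial_finsupp_sum_index, algebraMap_eq]
  refine congrArg _ (Finsupp.prod_congr fun v hv => ?_)
  rw [if_neg fun hT => Finsupp.mem_support_iff.mp hv (h v hT), monomial_pow, one_pow]

lemma cutHom_monomial_of_not_vanishesOn {T : Finset (Fin n)} {e : Fin n ⊕ Fin n →₀ ℕ}
    (h : ¬VanishesOn T e) (c : K) : cutHom K T (monomial e c) = 0 := by
  obtain ⟨v, hvT, hv⟩ := not_forall.mp h |>.imp fun _ => Classical.not_imp.mp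
  rw [cutHom, aeval_monomial, Finsupp.prod,
    prod_eq_zero (Finsupp.mem_support_iff.mpr hv) (by simp [hvT, hv]), mul_zero]

lemma cutHom_binomial (T : Finset (Fin n)) {i j : Fin n}
    (h : i ∈ T ∨ j ∈ T ∨ cutIndex T i = cutIndex T j) :
    cutHom K T (xv K i * yv K j - xv K j * yv K i) = 0 := by
  by_cases hi : i ∈ T
  · simp [xv, yv, cutHom_X, vertex, hi]
  by_cases hj : j ∈ T
  · simp [xv, yv, cutHom_X, vertex, hj]
  have hc := (h.resolve_left hi).resolve_left hj
  simp only [xv, yv, map_sub, map_mul, cutHom_X, vertex, Sum.elim_inl, Sum.elim_inr, id_eq, hi,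
    hj, if_false, monomial_mul, mul_one, sub_eq_zero]
  congr 1
  simp only [vertexExp, vertex, Sum.elim_inl, Sum.elim_inr, id_eq, Sum.map_inl, Sum.map_inr, hc]
  ac_rfl

lemma weight_vertexExp_inl (T : Finset (Fin n)) (e : Fin n ⊕ Fin n →₀ ℕ) (i : Fin n) :
    Finsupp.weight (vertexExp T) e (Sum.inl i) = e (Sum.inl i) + e (Sum.inr i) := by
  simp [Finsupp.weight_eq_sum, vertexExp, vertex, Finsupp.single_apply]

lemma weight_vertexExp_inr_inl (T : Finset (Fin n)) (e : Fin n ⊕ Fin n →₀ ℕ) (k : ℕ) :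
    Finsupp.weight (vertexExp T) e (Sum.inr (Sum.inl k)) =
      ∑ i with cutIndex T i = k, e (Sum.inl i) := by
  simp [Finsupp.weight_eq_sum, vertexExp, vertex, Finsupp.single_apply, sum_filter]

lemma coeff_cutHom_of_unique (T : Finset (Fin n)) {r : MvPolynomial (Fin n ⊕ Fin n) K}
    {e₀ : Fin n ⊕ Fin n →₀ ℕ} (he₀ : e₀ ∈ r.support) (h₀ : VanishesOn T e₀)
    (huniq : ∀ e ∈ r.support, VanishesOn T e →
      Finsupp.weight (vertexExp T) e = Finsupp.weight (vertexExp T) e₀ → e = e₀) :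
    coeff (Finsupp.weight (vertexExp T) e₀) (cutHom K T r) = coeff e₀ r := by
  conv_lhs => rw [← support_sum_monomial_coeff r]
  rw [map_sum, coeff_sum, sum_eq_single e₀ (fun e he hne => ?_) (absurd he₀)]
  · simp [cutHom_monomial h₀]
  by_cases h : VanishesOn T e
  · rw [cutHom_monomial h, coeff_monomial, if_neg fun hW => hne (huniq e he h hW)]
  · rw [cutHom_monomial_of_not_vanishesOn h, coeff_zero]

end CutHom

section Recovery

lemma sum_fiber_lt_of_lt {ι κ : Type*} [LinearOrder ι] [Fintype ι] [DecidableEq κ] (blk : ι → κ)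
    {a b a' b' : ι → ℕ} (hab : ∀ i, a i + b i = a' i + b' i)
    (hsat : ∀ i j, i < j → blk i = blk j → a i = 0 ∨ b j = 0) {i₀ : ι} (hlt : a' i₀ < a i₀)
    (hmin : ∀ j < i₀, a j = a' j) :
    ∑ i with blk i = blk i₀, a' i < ∑ i with blk i = blk i₀, a i := by
  refine sum_lt_sum (fun j hj => ?_) ⟨i₀, by simp, hlt⟩
  rcases lt_trichotomy j i₀ with h | rfl | h
  · exact (hmin j h).ge
  · exact hlt.le
  · have := (hsat i₀ j h (mem_filter.mp hj).2.symm).resolve_left (by omega)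
    have := hab j
    omega

theorem eq_of_sum_fiber_eq {ι κ : Type*} [LinearOrder ι] [Fintype ι] [DecidableEq κ]
    (blk : ι → κ) {a b a' b' : ι → ℕ} (hab : ∀ i, a i + b i = a' i + b' i)
    (hsum : ∀ k, ∑ i with blk i = k, a i = ∑ i with blk i = k, a' i)
    (hsat : ∀ i j, i < j → blk i = blk j → a i = 0 ∨ b j = 0)
    (hsat' : ∀ i j, i < j → blk i = blk j → a' i = 0 ∨ b' j = 0) : a = a' := by
  by_contra hne
  obtain ⟨i₀, hi₀, hmin⟩ := wellFounded_lt.has_min {i | a i ≠ a' i} (Function.ne_iff.mp hne)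
  have hmin : ∀ j < i₀, a j = a' j := fun j hj => not_not.mp fun h => hmin j h hj
  rcases Nat.lt_or_gt_of_ne hi₀ with h | h
  · exact (sum_fiber_lt_of_lt blk (fun i => (hab i).symm) hsat' h
      fun j hj => (hmin j hj).symm).ne (hsum _)
  · exact (sum_fiber_lt_of_lt blk hab hsat h hmin).ne (hsum _).symm

lemma eq_of_weight_vertexExp_eq {T : Finset (Fin n)} {e e₀ : Fin n ⊕ Fin n →₀ ℕ}
    (hsat : ∀ i j, i < j → cutIndex T i = cutIndex T j →
      e (Sum.inl i) = 0 ∨ e (Sum.inr j) = 0)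
    (hsat₀ : ∀ i j, i < j → cutIndex T i = cutIndex T j →
      e₀ (Sum.inl i) = 0 ∨ e₀ (Sum.inr j) = 0)
    (hW : Finsupp.weight (vertexExp T) e = Finsupp.weight (vertexExp T) e₀) : e = e₀ := by
  have hab (i : Fin n) : e (Sum.inl i) + e (Sum.inr i) = e₀ (Sum.inl i) + e₀ (Sum.inr i) := by
    simpa only [weight_vertexExp_inl] using DFunLike.congr_fun hW (Sum.inl i)
  have ha := eq_of_sum_fiber_eq (cutIndex T) hab (fun k => by
    simpa only [weight_vertexExp_inr_inl] using DFunLike.congr_fun hW (Sum.inr (Sum.inl k)))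
    hsat hsat₀
  ext (i | i)
  · exact congrFun ha i
  · have := hab i
    have := congrFun ha i
    omega

lemma IsStandardMonomial.eq_of_weight_vertexExp_empty_eq {e e₀ : Fin n ⊕ Fin n →₀ ℕ}
    (he : IsStandardMonomial ⊤ e) (he₀ : IsStandardMonomial ⊤ e₀)
    (hW : Finsupp.weight (vertexExp ∅) e = Finsupp.weight (vertexExp ∅) e₀) : e = e₀ :=
  eq_of_weight_vertexExp_eq (fun i j hij _ => he i j hij hij.ne)
    (fun i j hij _ => he₀ i j hij hij.ne) hW

lemma lineG_adj_iff {i j : Fin n} (hij : i < j) : (lineG n).Adj i j ↔ j.val = i.val + 1 := by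
  have := Fin.lt_def.mp hij
  rw [lineG, SimpleGraph.fromRel_adj]
  exact ⟨by omega, fun h => ⟨hij.ne, Or.inl h⟩⟩

lemma IsStandardMonomial.lineG_of_occurs_between {e : Fin n ⊕ Fin n →₀ ℕ}
    (he : IsStandardMonomial (lineG n) e) {i j : Fin n} (hij : i < j)
    (hrun : ∀ k, i < k → k < j → e (Sum.inl k) + e (Sum.inr k) ≠ 0) :
    e (Sum.inl i) = 0 ∨ e (Sum.inr j) = 0 := by
  obtain ⟨j, hjn⟩ := j
  induction j with
  | zero => exact absurd hij (by simp [Fin.lt_def])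
  | succ j ih =>
    have hj : j < n := by omega
    obtain h | h : i.val = j ∨ i.val < j := by
      have := Fin.lt_def.mp hij
      simp only at this
      omega
    · exact he i _ hij ((lineG_adj_iff hij).mpr (by simp [h]))
    have hjj : (⟨j, hj⟩ : Fin n) < ⟨j + 1, hjn⟩ := by simp [Fin.lt_def]
    refine (ih hj (Fin.lt_def.mpr h) fun k hik hkj => hrun k hik (hkj.trans hjj)).imp_right
      fun hy => (he _ _ hjj ((lineG_adj_iff hjj).mpr rfl)).resolve_left ?_
    have := hrun ⟨j, hj⟩ (Fin.lt_def.mpr h) hjj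
    omega

def interior (n : ℕ) : Finset (Fin n) := {i | 0 < i.val ∧ i.val + 1 < n}

lemma IsStandardMonomial.lineG_of_cutIndex_eq {e : Fin n ⊕ Fin n →₀ ℕ}
    (he : IsStandardMonomial (lineG n) e) {T : Finset (Fin n)}
    (hT : ∀ k ∈ interior n, k ∉ T → e (Sum.inl k) + e (Sum.inr k) ≠ 0)
    (i j : Fin n) (hij : i < j) (hc : cutIndex T i = cutIndex T j) :
    e (Sum.inl i) = 0 ∨ e (Sum.inr j) = 0 := by
  refine he.lineG_of_occurs_between hij fun k hik hkj =>
    hT k ?_ fun hk => (cutIndex_lt_of_mem hk hik.le hkj).ne hc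
  have := Fin.lt_def.mp hik
  have := Fin.lt_def.mp hkj
  simp only [interior, mem_filter, mem_univ, true_and]
  omega

def gaps (e : Fin n ⊕ Fin n →₀ ℕ) : Finset (Fin n) :=
  {k ∈ interior n | e (Sum.inl k) + e (Sum.inr k) = 0}

lemma vanishesOn_gaps (e : Fin n ⊕ Fin n →₀ ℕ) : VanishesOn (gaps e) e := by
  rintro (k | k) hk <;>
    simp only [gaps, vertex, Sum.elim_inl, Sum.elim_inr, id_eq, mem_filter] at hk <;> omega

lemma IsStandardMonomial.eq_of_weight_vertexExp_gaps_eq {e e₀ : Fin n ⊕ Fin n →₀ ℕ}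
    (he : IsStandardMonomial (lineG n) e) (he₀ : IsStandardMonomial (lineG n) e₀)
    (hW : Finsupp.weight (vertexExp (gaps e₀)) e = Finsupp.weight (vertexExp (gaps e₀)) e₀) :
    e = e₀ := by
  have hgap (k) (hk : k ∈ interior n) (hkT : k ∉ gaps e₀) :
      e₀ (Sum.inl k) + e₀ (Sum.inr k) ≠ 0 := by
    simpa [gaps, hk] using hkT
  refine eq_of_weight_vertexExp_eq (he.lineG_of_cutIndex_eq fun k hk hkT => ?_)
    (he₀.lineG_of_cutIndex_eq hgap) hW
  have := DFunLike.congr_fun hW (Sum.inl k)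
  rw [weight_vertexExp_inl, weight_vertexExp_inl] at this
  exact this ▸ hgap k hk hkT

end Recovery

section Kernels

lemma bei_lineG_le_ker_cutHom (T : Finset (Fin n)) :
    bei K (lineG n) ≤ RingHom.ker (cutHom K T) :=
  bei_le fun i j hij hadj => RingHom.mem_ker.mpr <| cutHom_binomial T <| by
    by_cases hi : i ∈ T
    · exact Or.inl hi
    · exact Or.inr (Or.inr (cutIndex_eq_of_notMem hi ((lineG_adj_iff hij).mp hadj)).symm)

lemma bei_top_le_ker_cutHom_empty :
    bei K (⊤ : SimpleGraph (Fin n)) ≤ RingHom.ker (cutHom K ∅) :=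
  bei_le fun _ _ _ _ => RingHom.mem_ker.mpr <| cutHom_binomial ∅ <| Or.inr <| Or.inr <| by
    simp [cutIndex]

lemma eq_zero_of_forall_cutHom_eq_zero {r : MvPolynomial (Fin n ⊕ Fin n) K}
    (hr : r ∈ restrictSupport K {e | IsStandardMonomial (lineG n) e})
    (h : ∀ T ⊆ interior n, cutHom K T r = 0) : r = 0 := by
  by_contra hr0
  obtain ⟨e₀, he₀⟩ := ne_zero_iff.mp hr0
  have := coeff_cutHom_of_unique (gaps e₀) (mem_support_iff.mpr he₀) (vanishesOn_gaps e₀)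
    fun e he _ hW => IsStandardMonomial.eq_of_weight_vertexExp_gaps_eq (hr he)
      (hr (mem_support_iff.mpr he₀)) hW
  rw [h (gaps e₀) (filter_subset _ _), coeff_zero] at this
  exact he₀ this.symm

lemma eq_zero_of_cutHom_empty_eq_zero {r : MvPolynomial (Fin n ⊕ Fin n) K}
    (hr : r ∈ restrictSupport K {e | IsStandardMonomial ⊤ e}) (h : cutHom K ∅ r = 0) :
    r = 0 := by
  by_contra hr0
  obtain ⟨e₀, he₀⟩ := ne_zero_iff.mp hr0
  have := coeff_cutHom_of_unique ∅ (mem_support_iff.mpr he₀)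
    (fun _ hv => absurd hv (notMem_empty _)) fun e he _ hW =>
      IsStandardMonomial.eq_of_weight_vertexExp_empty_eq (hr he) (hr (mem_support_iff.mpr he₀)) hW
  rw [h, coeff_zero] at this
  exact he₀ this.symm

theorem mem_bei_lineG_iff (p : MvPolynomial (Fin n ⊕ Fin n) K) :
    p ∈ bei K (lineG n) ↔ ∀ T ⊆ interior n, cutHom K T p = 0 := by
  simpa only [Subtype.forall] using mem_bei_iff_forall_eq_zero
    (fun T : {T // T ⊆ interior n} => cutHom K T.1) (fun T => bei_lineG_le_ker_cutHom T.1)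
    (fun r hr h => eq_zero_of_forall_cutHom_eq_zero hr fun T hT => h ⟨T, hT⟩) p

theorem mem_bei_top_iff (p : MvPolynomial (Fin n ⊕ Fin n) K) :
    p ∈ bei K (⊤ : SimpleGraph (Fin n)) ↔ cutHom K ∅ p = 0 := by
  simpa only [forall_const] using mem_bei_iff_forall_eq_zero (fun _ : Unit => cutHom K ∅)
    (fun _ => bei_top_le_ker_cutHom_empty)
    (fun r hr h => eq_zero_of_cutHom_empty_eq_zero hr (h ())) p

end Kernels

section Colon

variable (K) in
def interiorProd (n : ℕ) : MvPolynomial (Fin n ⊕ Fin n) K := ∏ i ∈ interior n, xv K i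

lemma cutHom_interiorProd {T : Finset (Fin n)} (hT : T ⊆ interior n) (hne : T.Nonempty) :
    cutHom K T (interiorProd K n) = 0 := by
  obtain ⟨t, ht⟩ := hne
  rw [interiorProd, map_prod]
  exact prod_eq_zero (hT ht) (by simp [xv, cutHom_X, vertex, ht])

lemma cutHom_empty_interiorProd_ne_zero : cutHom K ∅ (interiorProd K n) ≠ 0 := by
  simp [interiorProd, map_prod, xv, cutHom_X, prod_ne_zero_iff]

lemma cutHom_empty_gElt (hn : 0 < n) : cutHom K ∅ (gElt K hn) = 0 :=
  cutHom_binomial ∅ (Or.inr (Or.inr (by simp [cutIndex])))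

lemma cutHom_gElt_ne_zero (hn : 0 < n) {T : Finset (Fin n)} (hT : T ⊆ interior n)
    (hne : T.Nonempty) : cutHom K T (gElt K hn) ≠ 0 := by
  obtain ⟨t, ht⟩ := hne
  have hmem (i : Fin n) (hi : i ∈ T) : 0 < i.val ∧ i.val + 1 < n := by
    simpa [interior] using hT hi
  have h₀ : (⟨0, hn⟩ : Fin n) ∉ T := fun h => by simpa using (hmem _ h).1
  have h₁ : (⟨n - 1, by omega⟩ : Fin n) ∉ T := fun h => by have := (hmem _ h).2; simp at this; omega
  have hlt : cutIndex T ⟨0, hn⟩ < cutIndex T ⟨n - 1, by omega⟩ := by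
    have := hmem t ht
    exact cutIndex_lt_of_mem ht (Fin.le_def.mpr (by simp)) (Fin.lt_def.mpr (by simp; omega))
  simp only [gElt, xv, yv, map_sub, map_mul, cutHom_X, vertex, Sum.elim_inl, Sum.elim_inr, id_eq,
    h₀, h₁, if_false, monomial_mul, mul_one, ne_eq, sub_eq_zero]
  intro h
  have := DFunLike.congr_fun (monomial_left_injective one_ne_zero h)
    (Sum.inr (Sum.inl (cutIndex T ⟨0, hn⟩)))
  simp [vertexExp, hlt.ne'] at this

lemma interiorProd_mul_gElt_mem (hn : 0 < n) :
    interiorProd K n * gElt K hn ∈ bei K (lineG n) := by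
  refine (mem_bei_lineG_iff _).mpr fun T hT => ?_
  rcases T.eq_empty_or_nonempty with rfl | hne
  · rw [map_mul, cutHom_empty_gElt, mul_zero]
  · rw [map_mul, cutHom_interiorProd hT hne, zero_mul]

end Colon

/-- Let `L` be the line (path) on `[n]`, `I_L` its binomial edge
ideal, `g = x_1 y_n − x_n y_1`, and `J_G̃` the binomial edge ideal of the complete
graph on `[n]`.  Then `I_L : (I_L : g) = J_G̃`. -/
theorem statement10 (K : Type) [Field K] (n : ℕ) (hn : 0 < n) :
    (bei K (lineG n)).colon ((bei K (lineG n)).colon (Ideal.span {gElt K hn})) =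
      bei K (⊤ : SimpleGraph (Fin n)) := by
  ext r
  constructor
  · intro hr
    have hu : interiorProd K n ∈ (bei K (lineG n)).colon (Ideal.span {gElt K hn}) :=
      Ideal.mem_colon_span_singleton.mpr (interiorProd_mul_gElt_mem hn)
    have hru := (mem_bei_lineG_iff _).mp (Submodule.mem_colon.mp hr _ hu) ∅ (empty_subset _)
    rw [smul_eq_mul, map_mul] at hru
    exact (mem_bei_top_iff r).mpr
      ((mul_eq_zero.mp hru).resolve_right cutHom_empty_interiorProd_ne_zero)
  · intro hr
    refine Submodule.mem_colon.mpr fun p hp => (mem_bei_lineG_iff _).mpr fun T hT => ?_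
    rw [smul_eq_mul, map_mul]
    rcases T.eq_empty_or_nonempty with rfl | hne
    · rw [(mem_bei_top_iff r).mp hr, zero_mul]
    · have hpg := (mem_bei_lineG_iff _).mp (Ideal.mem_colon_span_singleton.mp hp) T hT
      rw [map_mul] at hpg
      rw [(mul_eq_zero.mp hpg).resolve_right (cutHom_gElt_ne_zero hn hT hne), mul_zero]

end BEIPaper
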